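/- arXiv:2106.01926 — 2 statements merged into one kernel-verified Lean document; each statement's English description precedes it below -/
import Mathlib

section
/- If S is negative semidefinite, i.e. xᵀSx ≤ 0 for all x ∈ ℝ^m, then H(σ(h)) ≤ H(σ(0)). -/
/-!
The right-hand side of the collocation equation defines a differentiable path
`φ(c) = σ(0) + h ∑_j (∫₀^c P_j) S β_j` on all of `ℝ`, agreeing with `c ↦ σ(ch)` on `[0,1]`,
with `φ'(c) = h ∑_j P_j(c) S β_j`. By the chain rule and the fundamental theorem of calculus,
`H(σ(h)) - H(σ(0)) = h ∑_j ∫₀¹ P_j(c) ∇H(φ(c)) ⬝ S β_j dc = h ∑_j β_j ⬝ S β_j`,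
and every term is `≤ 0` since `S` is negative semidefinite.
-/

open Matrix MeasureTheory Finset

variable {n : Type*} [Fintype n]

theorem intervalIntegral_dotProduct_const {f : ℝ → n → ℝ} {a b : ℝ}
    (hf : IntervalIntegrable f volume a b) (v : n → ℝ) :
    ∫ c in a..b, f c ⬝ᵥ v = (∫ c in a..b, f c) ⬝ᵥ v :=
  (LinearMap.toContinuousLinearMap ((dotProductBilin ℝ ℝ).flip v)).intervalIntegral_comp_comm hf

theorem continuous_of_hasFDerivAt_gradient {H : (n → ℝ) → ℝ} {gradH : (n → ℝ) → n → ℝ}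
    (hH : ContDiff ℝ 1 H)
    (hgrad : ∀ x, HasFDerivAt H
      (∑ i, gradH x i • (ContinuousLinearMap.proj i : (n → ℝ) →L[ℝ] ℝ)) x) :
    Continuous gradH := by
  classical
  have hfd : ∀ x i, gradH x i = fderiv ℝ H x (Pi.single i 1) := fun x i => by
    simp [(hgrad x).fderiv, Pi.single_apply]
  exact continuous_pi fun i => by
    simpa only [hfd] using (hH.continuous_fderiv one_ne_zero).clm_apply continuous_const

theorem hasDerivAt_comp_of_gradient {H : (n → ℝ) → ℝ} {gradH : (n → ℝ) → n → ℝ}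
    (hgrad : ∀ x, HasFDerivAt H
      (∑ i, gradH x i • (ContinuousLinearMap.proj i : (n → ℝ) →L[ℝ] ℝ)) x)
    {φ : ℝ → n → ℝ} {φ' : n → ℝ} {c : ℝ} (hφ : HasDerivAt φ φ' c) :
    HasDerivAt (fun t => H (φ t)) (gradH (φ c) ⬝ᵥ φ') c := by
  refine ((hgrad (φ c)).comp_hasDerivAt c hφ).congr_deriv ?_
  simp [dotProduct]

theorem sub_eq_integral_gradient_dotProduct {H : (n → ℝ) → ℝ} {gradH : (n → ℝ) → n → ℝ}
    (hgrad : ∀ x, HasFDerivAt H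
      (∑ i, gradH x i • (ContinuousLinearMap.proj i : (n → ℝ) →L[ℝ] ℝ)) x)
    (hgradc : Continuous gradH) {φ φ' : ℝ → n → ℝ} (hφ : ∀ c, HasDerivAt φ (φ' c) c)
    (hφ' : Continuous φ') (a b : ℝ) :
    H (φ b) - H (φ a) = ∫ c in a..b, gradH (φ c) ⬝ᵥ φ' c := by
  have hφc : Continuous φ := continuous_iff_continuousAt.2 fun c => (hφ c).continuousAt
  refine (intervalIntegral.integral_eq_sub_of_hasDerivAt
    (fun c _ => hasDerivAt_comp_of_gradient hgrad (hφ c)) ?_).symm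
  exact ((hgradc.comp hφc).dotProduct hφ').intervalIntegrable a b

theorem sub_eq_sum_integral_smul_gradient_dotProduct {ι : Type*} (t : Finset ι)
    {p : ι → ℝ → ℝ} (hp : ∀ j, Continuous (p j)) (w : ι → n → ℝ) {φ : ℝ → n → ℝ}
    (hφ : ∀ c, HasDerivAt φ (∑ j ∈ t, p j c • w j) c) {H : (n → ℝ) → ℝ}
    {gradH : (n → ℝ) → n → ℝ}
    (hgrad : ∀ x, HasFDerivAt H
      (∑ i, gradH x i • (ContinuousLinearMap.proj i : (n → ℝ) →L[ℝ] ℝ)) x)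
    (hgradc : Continuous gradH) (a b : ℝ) :
    H (φ b) - H (φ a) = ∑ j ∈ t, (∫ c in a..b, p j c • gradH (φ c)) ⬝ᵥ w j := by
  have hφc : Continuous φ := continuous_iff_continuousAt.2 fun c => (hφ c).continuousAt
  have hcont : ∀ j, Continuous fun c => p j c • gradH (φ c) := fun j =>
    (hp j).smul (hgradc.comp hφc)
  rw [sub_eq_integral_gradient_dotProduct hgrad hgradc hφ
    (continuous_finsetSum t fun j _ => (hp j).smul continuous_const) a b]
  simp_rw [dotProduct_sum, dotProduct_smul, ← smul_dotProduct]
  rw [intervalIntegral.integral_finsetSum fun j _ =>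
    ((hcont j).dotProduct continuous_const).intervalIntegrable a b]
  exact sum_congr rfl fun j _ =>
    intervalIntegral_dotProduct_const ((hcont j).intervalIntegrable a b) (w j)

theorem hasDerivAt_sum_integral_smul {E : Type*} [NormedAddCommGroup E] [NormedSpace ℝ E]
    {ι : Type*} (t : Finset ι) {p : ι → ℝ → ℝ} (hp : ∀ j, Continuous (p j)) (w : ι → E)
    (a c : ℝ) :
    HasDerivAt (fun u => ∑ j ∈ t, (∫ x in a..u, p j x) • w j) (∑ j ∈ t, p j c • w j) c :=
  HasDerivAt.fun_sum fun j _ =>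
    ((hp j).integral_hasStrictDerivAt a c).hasDerivAt.smul_const (w j)

theorem stmt5_general
    (P : ℕ → Polynomial ℝ)
    (m s : ℕ)
    (S : Matrix (Fin m) (Fin m) ℝ)
    (H : (Fin m → ℝ) → ℝ) (gradH : (Fin m → ℝ) → (Fin m → ℝ))
    (hH1 : ContDiff ℝ 1 H)
    (hgrad : ∀ x : Fin m → ℝ,
      HasFDerivAt H (∑ i : Fin m, gradH x i •
        (ContinuousLinearMap.proj i : (Fin m → ℝ) →L[ℝ] ℝ)) x)
    (h : ℝ) (hh : 0 < h)
    (σ : ℝ → Fin m → ℝ)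
    (hσeq : ∀ c ∈ Set.Icc (0:ℝ) 1,
      σ (c * h) = σ 0 + h • ∑ j ∈ Finset.range s,
        (∫ x in (0:ℝ)..c, (P j).eval x) •
          S.mulVec (∫ ζ in (0:ℝ)..1, (P j).eval ζ • gradH (σ (ζ * h))))
    (hneg : ∀ x : Fin m → ℝ, x ⬝ᵥ S.mulVec x ≤ 0) :
    H (σ h) ≤ H (σ 0) := by
  set β : ℕ → Fin m → ℝ := fun j => ∫ ζ in (0:ℝ)..1, (P j).eval ζ • gradH (σ (ζ * h))
  set φ : ℝ → Fin m → ℝ := fun c =>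
    σ 0 + h • ∑ j ∈ range s, (∫ x in (0:ℝ)..c, (P j).eval x) • S *ᵥ β j
  have hσφ : ∀ c ∈ Set.Icc (0:ℝ) 1, σ (c * h) = φ c := hσeq
  have hβ : ∀ j, β j = ∫ ζ in (0:ℝ)..1, (P j).eval ζ • gradH (φ ζ) := fun j =>
    intervalIntegral.integral_congr fun ζ hζ => by
      rw [hσφ ζ (by rwa [Set.uIcc_of_le zero_le_one] at hζ)]
  have hφ : ∀ c, HasDerivAt φ (∑ j ∈ range s, (P j).eval c • h • S *ᵥ β j) c := fun c =>
    (((hasDerivAt_sum_integral_smul _ (fun j => (P j).continuous) _ 0 c).const_smul h).const_add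
      (σ 0)).congr_deriv (by simp only [smul_sum, smul_comm h])
  have hbalance := sub_eq_sum_integral_smul_gradient_dotProduct (range s)
    (fun j => (P j).continuous) _ hφ hgrad (continuous_of_hasFDerivAt_gradient hH1 hgrad) 0 1
  simp only [← hβ, dotProduct_smul, smul_eq_mul] at hbalance
  have h0 : σ 0 = φ 0 := by simpa using hσφ 0 (by simp)
  have h1 : σ h = φ 1 := by simpa using hσφ 1 (by simp)
  have hdiss : ∑ j ∈ range s, h * (β j ⬝ᵥ S *ᵥ β j) ≤ 0 :=
    sum_nonpos fun j _ => mul_nonpos_of_nonneg_of_nonpos hh.le (hneg _)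
  rw [h0, h1]
  linarith

/-- For the problem `ẏ = S ∇H(y)` with `S` negative semidefinite (`xᵀSx ≤ 0` for all `x`),
the polynomial approximation `σ` of degree `≤ s` satisfying
`σ(ch) = σ(0) + h ∑_{j<s} (∫₀^c P_j) S β_j(σ)`, `β_j(σ) = ∫₀¹ P_j(ζ) ∇H(σ(ζh)) dζ`,
dissipates the Hamiltonian: `H(σ(h)) ≤ H(σ(0))`. -/
theorem stmt5
    (P : ℕ → Polynomial ℝ)
    (hPdeg : ∀ j, (P j).natDegree = j)
    (hPlead : ∀ j, 0 < (P j).leadingCoeff)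
    (hPorth : ∀ i j : ℕ,
      (∫ x in (0:ℝ)..1, (P i).eval x * (P j).eval x) = if i = j then (1:ℝ) else 0)
    (m s : ℕ) (hm : 1 ≤ m) (hs : 1 ≤ s)
    (S : Matrix (Fin m) (Fin m) ℝ)
    (H : (Fin m → ℝ) → ℝ) (gradH : (Fin m → ℝ) → (Fin m → ℝ))
    (hH1 : ContDiff ℝ 1 H)
    (hgrad : ∀ x : Fin m → ℝ,
      HasFDerivAt H (∑ i : Fin m, gradH x i •
        (ContinuousLinearMap.proj i : (Fin m → ℝ) →L[ℝ] ℝ)) x)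
    (h : ℝ) (hh : 0 < h)
    (σ : ℝ → Fin m → ℝ)
    (hσpoly : ∀ i : Fin m,
      ∃ p : Polynomial ℝ, p.natDegree ≤ s ∧ ∀ t : ℝ, σ t i = p.eval t)
    (hσeq : ∀ c ∈ Set.Icc (0:ℝ) 1,
      σ (c * h) = σ 0 + h • ∑ j ∈ Finset.range s,
        (∫ x in (0:ℝ)..c, (P j).eval x) •
          S.mulVec (∫ ζ in (0:ℝ)..1, (P j).eval ζ • gradH (σ (ζ * h))))
    (hneg : ∀ x : Fin m → ℝ, x ⬝ᵥ S.mulVec x ≤ 0) :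
    H (σ h) ≤ H (σ 0) :=
  stmt5_general P m s S H gradH hH1 hgrad h hh σ hσeq hneg
end

section
/- Assume H is a polynomial (in m variables) whose total degree d satisfies s·d ≤ q. Then: if Sᵀ = −S one has H(u(h)) = H(u(0)); and if xᵀSx ≤ 0 for all x ∈ ℝ^m one has H(u(h)) ≤ H(u(0)). -/
/-!
Put `γ(t) = u(th)`. The collocation equation exhibits `γ` on `[0,1]` as a vector of polynomials
of degree `≤ s` (antiderivatives of the `P_j`), so `Φ = H ∘ γ` is a polynomial of degree
`≤ s · deg H ≤ q` and the quadrature integrates `Φ'` exactly: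
`H(u(h)) - H(u(0)) = ∑ᵢ bᵢ ∇H(γ(cᵢ)) · γ'(cᵢ)`. As `γ'(cᵢ) = h ∑ⱼ Pⱼ(cᵢ) S vⱼ` with
`vⱼ = ∑ᵢ bᵢ Pⱼ(cᵢ) ∇H(γ(cᵢ))`, exchanging the sums gives `h ∑ⱼ vⱼᵀ S vⱼ`, which vanishes for
skew-symmetric `S` and is `≤ 0` for negative semidefinite `S`.
-/

open Matrix

namespace Polynomial

section Antideriv

variable {K : Type*} [Field K]

noncomputable def antideriv (p : K[X]) : K[X] :=
  p.sum fun n a => C (a / (n + 1)) * X ^ (n + 1)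

theorem derivative_antideriv [CharZero K] (p : K[X]) : derivative (antideriv p) = p := by
  conv_rhs => rw [← p.sum_C_mul_X_pow_eq]
  simp only [antideriv, Polynomial.sum, map_sum, derivative_C_mul_X_pow]
  refine Finset.sum_congr rfl fun n _ => ?_
  push_cast
  rw [div_mul_cancel₀ _ (Nat.cast_add_one_ne_zero n)]

theorem eval_zero_antideriv (p : K[X]) : (antideriv p).eval 0 = 0 := by
  simp [antideriv, Polynomial.sum, eval_finsetSum]

theorem natDegree_antideriv_le (p : K[X]) : (antideriv p).natDegree ≤ p.natDegree + 1 :=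
  natDegree_sum_le_of_forall_le _ _ fun n hn =>
    (natDegree_C_mul_le _ _).trans <| (natDegree_X_pow_le _).trans <|
      Nat.succ_le_succ (le_natDegree_of_mem_supp n hn)

end Antideriv

theorem integral_eval_derivative (p : ℝ[X]) (a b : ℝ) :
    ∫ x in a..b, (derivative p).eval x = p.eval b - p.eval a :=
  intervalIntegral.integral_eq_sub_of_hasDerivAt (fun x _ => p.hasDerivAt x)
    ((derivative p).continuous.intervalIntegrable _ _)

theorem integral_eval_eq_eval_antideriv (p : ℝ[X]) (t : ℝ) :
    ∫ x in (0 : ℝ)..t, p.eval x = (antideriv p).eval t := by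
  conv_lhs => rw [← derivative_antideriv p]
  rw [integral_eval_derivative, eval_zero_antideriv, sub_zero]

end Polynomial

namespace MvPolynomial

variable {R σ : Type*} [CommSemiring R]

theorem eval_aeval_polynomial (W : σ → Polynomial R) (p : MvPolynomial σ R) (t : R) :
    (aeval W p).eval t = eval (fun l => (W l).eval t) p := by
  rw [← Polynomial.coe_aeval_eq_eval, ← AlgHom.comp_apply, comp_aeval]
  rfl

theorem natDegree_aeval_le (W : σ → Polynomial R) {d : ℕ} (hW : ∀ l, (W l).natDegree ≤ d)
    (p : MvPolynomial σ R) : (aeval W p).natDegree ≤ p.totalDegree * d := by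
  rw [aeval_eq_eval₂Hom, coe_eval₂Hom, eval₂_eq]
  refine Polynomial.natDegree_sum_le_of_forall_le _ _ fun e he => ?_
  calc _ ≤ (∏ i ∈ e.support, W i ^ e i).natDegree := Polynomial.natDegree_C_mul_le _ _
    _ ≤ ∑ i ∈ e.support, e i * d := (Polynomial.natDegree_prod_le _ _).trans <|
        Finset.sum_le_sum fun i _ => Polynomial.natDegree_pow_le_of_le _ (hW i)
    _ = (∑ i ∈ e.support, e i) * d := (Finset.sum_mul ..).symm
    _ ≤ p.totalDegree * d := Nat.mul_le_mul_right _ (le_totalDegree he)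

theorem _root_.Derivation.map_mvPolynomial_aeval [Fintype σ] {A M : Type*} [CommSemiring A]
    [Algebra R A] [AddCommMonoid M] [Module A M] [Module R M] [IsScalarTower R A M]
    (D : Derivation R A M) (W : σ → A) (p : MvPolynomial σ R) :
    D (aeval W p) = ∑ l, aeval W (pderiv l p) • D (W l) := by
  classical
  induction p using MvPolynomial.induction_on with
  | C a => simp
  | add p q hp hq => simp [hp, hq, add_smul, Finset.sum_add_distrib]
  | mul_X p n ih =>
    simp [Derivation.leibniz, ih, pderiv_X, Pi.single_apply, add_smul, mul_smul,
      Finset.sum_add_distrib, Finset.smul_sum, apply_ite (aeval W), ite_smul]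

end MvPolynomial

theorem dotProduct_mulVec_self_eq_zero_of_transpose_eq_neg {n R : Type*} [Fintype n] [CommRing R]
    [IsAddTorsionFree R] {S : Matrix n n R} (hS : Sᵀ = -S) (x : n → R) :
    x ⬝ᵥ S *ᵥ x = 0 := by
  rw [← self_eq_neg]
  calc x ⬝ᵥ S *ᵥ x = x ⬝ᵥ Sᵀ *ᵥ x := by
        rw [mulVec_transpose, dotProduct_mulVec, dotProduct_comm]
    _ = -(x ⬝ᵥ S *ᵥ x) := by rw [hS, neg_mulVec, dotProduct_neg]

theorem sum_mul_dotProduct_smul_sum {ι κ n R : Type*} [Fintype ι] [Fintype n] [CommSemiring R]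
    (b : ι → R) (g : ι → n → R) (r : R) (s : Finset κ) (a : ι → κ → R) (w : κ → n → R) :
    ∑ i, b i * (g i ⬝ᵥ r • ∑ j ∈ s, a i j • w j) =
      r * ∑ j ∈ s, (∑ i, (b i * a i j) • g i) ⬝ᵥ w j := by
  simp only [dotProduct_smul, dotProduct_sum, sum_dotProduct, smul_dotProduct, smul_eq_mul,
    Finset.mul_sum]
  rw [Finset.sum_comm]
  refine Finset.sum_congr rfl fun j _ => Finset.sum_congr rfl fun i _ => by ring

section Collocation

variable {σ : Type*}

noncomputable def evalGradient {R : Type*} [CommSemiring R] (H : MvPolynomial σ R) (x : σ → R) :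
    σ → R :=
  fun l => MvPolynomial.eval x (MvPolynomial.pderiv l H)

theorem eval_derivative_aeval {R : Type*} [CommSemiring R] [Fintype σ] (W : σ → Polynomial R)
    (H : MvPolynomial σ R) (t : R) :
    (Polynomial.derivative (MvPolynomial.aeval W H)).eval t =
      evalGradient H (fun l => (W l).eval t) ⬝ᵥ fun l => (Polynomial.derivative (W l)).eval t := by
  have := Polynomial.derivative'.map_mvPolynomial_aeval W H
  simp only [Polynomial.derivative'_apply, smul_eq_mul] at this
  simp [this, Polynomial.eval_finsetSum, MvPolynomial.eval_aeval_polynomial, evalGradient,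
    dotProduct]

noncomputable def collocationCurve (P : ℕ → Polynomial ℝ) (s : ℕ) (x₀ : σ → ℝ) (h : ℝ)
    (w : ℕ → σ → ℝ) (l : σ) : Polynomial ℝ :=
  Polynomial.C (x₀ l) + Polynomial.C h * ∑ j ∈ Finset.range s,
    Polynomial.antideriv (P j) * Polynomial.C (w j l)

variable (P : ℕ → Polynomial ℝ) (s : ℕ) (x₀ : σ → ℝ) (h : ℝ) (w : ℕ → σ → ℝ)

theorem eval_collocationCurve (t : ℝ) :
    (fun l => (collocationCurve P s x₀ h w l).eval t) =
      x₀ + h • ∑ j ∈ Finset.range s, (∫ x in (0 : ℝ)..t, (P j).eval x) • w j := by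
  ext l
  simp [collocationCurve, Polynomial.eval_finsetSum, Polynomial.integral_eval_eq_eval_antideriv,
    Finset.sum_apply]

theorem eval_derivative_collocationCurve (t : ℝ) :
    (fun l => (Polynomial.derivative (collocationCurve P s x₀ h w l)).eval t) =
      h • ∑ j ∈ Finset.range s, (P j).eval t • w j := by
  ext l
  simp [collocationCurve, Polynomial.eval_finsetSum, Polynomial.derivative_antideriv,
    Finset.sum_apply]

theorem natDegree_collocationCurve_le (hP : ∀ j, (P j).natDegree ≤ j) (l : σ) :
    (collocationCurve P s x₀ h w l).natDegree ≤ s := by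
  refine Polynomial.natDegree_add_le_of_degree_le (by simp) <|
    (Polynomial.natDegree_C_mul_le _ _).trans <|
      Polynomial.natDegree_sum_le_of_forall_le _ _ fun j hj => ?_
  calc _ ≤ (Polynomial.antideriv (P j)).natDegree := Polynomial.natDegree_mul_C_le _ _
    _ ≤ (P j).natDegree + 1 := Polynomial.natDegree_antideriv_le _
    _ ≤ s := by have := hP j; have := Finset.mem_range.mp hj; omega

end Collocation

theorem sum_mul_eval_derivative_eq_sub {k q : ℕ} {c b : Fin k → ℝ}
    (hquad : ∀ p : Polynomial ℝ, p.natDegree ≤ q - 1 →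
      ∑ i : Fin k, b i * p.eval (c i) = ∫ x in (0:ℝ)..1, p.eval x)
    {Φ : Polynomial ℝ} (hΦ : Φ.natDegree ≤ q) :
    ∑ i, b i * (Polynomial.derivative Φ).eval (c i) = Φ.eval 1 - Φ.eval 0 := by
  rw [hquad _ ((Polynomial.natDegree_derivative_le Φ).trans (Nat.sub_le_sub_right hΦ 1)),
    Polynomial.integral_eval_derivative]

section Energy

variable {σ : Type*} [Fintype σ] {k : ℕ}

noncomputable def discreteGradient (P : ℕ → Polynomial ℝ) (c b : Fin k → ℝ)
    (H : MvPolynomial σ ℝ) (y : Fin k → σ → ℝ) (j : ℕ) : σ → ℝ :=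
  ∑ i, (b i * (P j).eval (c i)) • evalGradient H (y i)

theorem eval_sub_eval_eq_sum_dotProduct_mulVec (P : ℕ → Polynomial ℝ)
    (hP : ∀ j, (P j).natDegree ≤ j) {q : ℕ} (c b : Fin k → ℝ) (hc : ∀ i, c i ∈ Set.Icc (0:ℝ) 1)
    (hquad : ∀ p : Polynomial ℝ, p.natDegree ≤ q - 1 →
      ∑ i : Fin k, b i * p.eval (c i) = ∫ x in (0:ℝ)..1, p.eval x)
    (s : ℕ) (S : Matrix σ σ ℝ) (H : MvPolynomial σ ℝ) (hH : s * H.totalDegree ≤ q)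
    (h : ℝ) (u : ℝ → σ → ℝ)
    (hu : ∀ t ∈ Set.Icc (0:ℝ) 1, u (t * h) = u 0 + h • ∑ j ∈ Finset.range s,
      (∫ x in (0:ℝ)..t, (P j).eval x) •
        S *ᵥ discreteGradient P c b H (fun i => u (c i * h)) j) :
    MvPolynomial.eval (u h) H - MvPolynomial.eval (u 0) H =
      h * ∑ j ∈ Finset.range s, discreteGradient P c b H (fun i => u (c i * h)) j ⬝ᵥ
        S *ᵥ discreteGradient P c b H (fun i => u (c i * h)) j := by
  set v := discreteGradient P c b H (fun i => u (c i * h))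
  set W := collocationCurve P s (u 0) h fun j => S *ᵥ v j
  have hW : ∀ t ∈ Set.Icc (0:ℝ) 1, (fun l => (W l).eval t) = u (t * h) := fun t ht => by
    rw [eval_collocationCurve, hu t ht]
  set Φ := MvPolynomial.aeval W H
  have hΦ : Φ.natDegree ≤ q :=
    (MvPolynomial.natDegree_aeval_le W (natDegree_collocationCurve_le _ _ _ _ _ hP) H).trans
      (by rwa [mul_comm])
  have hΦ' : ∀ i, (Polynomial.derivative Φ).eval (c i) =
      evalGradient H (u (c i * h)) ⬝ᵥ h • ∑ j ∈ Finset.range s, (P j).eval (c i) • S *ᵥ v j :=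
    fun i => by rw [eval_derivative_aeval, hW _ (hc i), eval_derivative_collocationCurve]
  calc MvPolynomial.eval (u h) H - MvPolynomial.eval (u 0) H = Φ.eval 1 - Φ.eval 0 := by
        rw [MvPolynomial.eval_aeval_polynomial, MvPolynomial.eval_aeval_polynomial,
          hW 1 (by simp), hW 0 (by simp), one_mul, zero_mul]
    _ = ∑ i, b i * (Polynomial.derivative Φ).eval (c i) :=
        (sum_mul_eval_derivative_eq_sub hquad hΦ).symm
    _ = h * ∑ j ∈ Finset.range s, v j ⬝ᵥ S *ᵥ v j := by
        simp only [hΦ']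
        exact sum_mul_dotProduct_smul_sum ..

end Energy

theorem stmt10_general
    (P : ℕ → Polynomial ℝ)
    (hPdeg : ∀ j, (P j).natDegree = j)
    (q k : ℕ)
    (c b : Fin k → ℝ)
    (hc : ∀ i, c i ∈ Set.Icc (0:ℝ) 1)
    (hquad : ∀ p : Polynomial ℝ, p.natDegree ≤ q - 1 →
      ∑ i : Fin k, b i * p.eval (c i) = ∫ x in (0:ℝ)..1, p.eval x)
    (m s : ℕ)
    (S : Matrix (Fin m) (Fin m) ℝ)
    (HP : MvPolynomial (Fin m) ℝ)
    (hHdeg : s * HP.totalDegree ≤ q)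
    (h : ℝ) (hh : 0 < h)
    (u : ℝ → Fin m → ℝ)
    (hueq : ∀ cc ∈ Set.Icc (0:ℝ) 1,
      u (cc * h) = u 0 + h • ∑ j ∈ Finset.range s,
        (∫ x in (0:ℝ)..cc, (P j).eval x) •
          S.mulVec (∑ i : Fin k, (b i * (P j).eval (c i)) •
            (fun l : Fin m =>
              MvPolynomial.eval (u (c i * h)) (MvPolynomial.pderiv l HP)))) :
    (Sᵀ = -S →
      MvPolynomial.eval (u h) HP = MvPolynomial.eval (u 0) HP) ∧
    ((∀ x : Fin m → ℝ, x ⬝ᵥ S.mulVec x ≤ 0) →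
      MvPolynomial.eval (u h) HP ≤ MvPolynomial.eval (u 0) HP) := by
  have key := eval_sub_eval_eq_sum_dotProduct_mulVec P (fun j => (hPdeg j).le) c b hc hquad
    s S HP hHdeg h u hueq
  refine ⟨fun hskew => ?_, fun hdiss => ?_⟩
  · rw [← sub_eq_zero, key]
    simp [dotProduct_mulVec_self_eq_zero_of_transpose_eq_neg hskew]
  · rw [← sub_nonpos, key]
    exact mul_nonpos_of_nonneg_of_nonpos hh.le (Finset.sum_nonpos fun j _ => hdiss _)

/-- Fully discretized conservative/dissipative case with polynomial Hamiltonian: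
assume `H` is a polynomial in `m` variables whose total degree `d` satisfies `s·d ≤ q`,
where the quadrature `(c_i, b_i)` has order `q`, and `u` is the degree-`≤ s` polynomial
satisfying `u(ch) = u(0) + h ∑_{j<s} (∫₀^c P_j) S ∑_i b_i P_j(c_i) ∇H(u(c_i h))`.
Then: if `Sᵀ = −S` one has `H(u(h)) = H(u(0))`; and if `xᵀSx ≤ 0` for all `x` one has
`H(u(h)) ≤ H(u(0))`. -/
theorem stmt10
    (P : ℕ → Polynomial ℝ)
    (hPdeg : ∀ j, (P j).natDegree = j)
    (hPlead : ∀ j, 0 < (P j).leadingCoeff)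
    (hPorth : ∀ i j : ℕ,
      (∫ x in (0:ℝ)..1, (P i).eval x * (P j).eval x) = if i = j then (1:ℝ) else 0)
    (q k : ℕ) (hq : 1 ≤ q) (hk : 1 ≤ k)
    (c b : Fin k → ℝ)
    (hc : ∀ i, c i ∈ Set.Icc (0:ℝ) 1)
    (hcinj : Function.Injective c)
    (hquad : ∀ p : Polynomial ℝ, p.natDegree ≤ q - 1 →
      ∑ i : Fin k, b i * p.eval (c i) = ∫ x in (0:ℝ)..1, p.eval x)
    (m s : ℕ) (hm : 1 ≤ m) (hs : 1 ≤ s)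
    (S : Matrix (Fin m) (Fin m) ℝ)
    (HP : MvPolynomial (Fin m) ℝ)
    (hHdeg : s * HP.totalDegree ≤ q)
    (h : ℝ) (hh : 0 < h)
    (u : ℝ → Fin m → ℝ)
    (hupoly : ∀ i : Fin m,
      ∃ p : Polynomial ℝ, p.natDegree ≤ s ∧ ∀ t : ℝ, u t i = p.eval t)
    (hueq : ∀ cc ∈ Set.Icc (0:ℝ) 1,
      u (cc * h) = u 0 + h • ∑ j ∈ Finset.range s,
        (∫ x in (0:ℝ)..cc, (P j).eval x) •
          S.mulVec (∑ i : Fin k, (b i * (P j).eval (c i)) •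
            (fun l : Fin m =>
              MvPolynomial.eval (u (c i * h)) (MvPolynomial.pderiv l HP)))) :
    (Sᵀ = -S →
      MvPolynomial.eval (u h) HP = MvPolynomial.eval (u 0) HP) ∧
    ((∀ x : Fin m → ℝ, x ⬝ᵥ S.mulVec x ≤ 0) →
      MvPolynomial.eval (u h) HP ≤ MvPolynomial.eval (u 0) HP) :=
  stmt10_general P hPdeg q k c b hc hquad m s S HP hHdeg h hh u hueq
end
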